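/- Let g ∈ ∂J(x) where J is the SLOPE norm with weights w_1 > 0, w_1 ≥ ... ≥ w_n ≥ 0, and suppose x_ℓ ≠ 0 for some index ℓ. Then sign(g_ℓ) · sign(x_ℓ) ≥ 0, with equality if and only if g_ℓ = 0. -/

import Mathlib

open Finset Matrix

/-- `kth v k` is the `(k+1)`-th largest entry of `v` (zero-indexed: `kth v 0` is the largest). -/
noncomputable def kth {n : ℕ} (v : Fin n → ℝ) (k : ℕ) : ℝ :=
  if h : k < n then v (Tuple.sort (fun i => -v i) ⟨k, h⟩) else 0

/-- `absKth v k` is the `(k+1)`-th largest absolute entry of `v` (zero-indexed). -/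
noncomputable def absKth {n : ℕ} (v : Fin n → ℝ) (k : ℕ) : ℝ :=
  kth (fun i => |v i|) k

/-- The SLOPE (sorted-ℓ1) function with weights `w 0 ≥ w 1 ≥ …` (zero-indexed). -/
noncomputable def slopeNorm {n : ℕ} (w : ℕ → ℝ) (x : Fin n → ℝ) : ℝ :=
  ∑ k ∈ Finset.range n, w k * absKth x k

/-- Dual norm of a norm `J` on `ℝ^n`. -/
noncomputable def dualNorm {n : ℕ} (J : (Fin n → ℝ) → ℝ) (g : Fin n → ℝ) : ℝ :=
  sSup {t : ℝ | ∃ x : Fin n → ℝ, J x ≤ 1 ∧ t = ∑ i, g i * x i}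

/-- `dropIdx ℓ v` is the vector `v` deprived of its `ℓ`-th entry. -/
def dropIdx {n : ℕ} (ℓ : Fin n) (v : Fin n → ℝ) : Fin (n - 1) → ℝ :=
  fun j => if h : (j : ℕ) < (ℓ : ℕ) then v ⟨j, lt_trans h ℓ.isLt⟩
           else v ⟨(j : ℕ) + 1, by have := j.isLt; omega⟩

/-
Flipping the sign of the `ℓ`-th entry of `x` gives a vector `y` with `J y = J x`, since the SLOPE
norm only sees absolute values. Hence `⟨g, x⟩ - 2 g_ℓ x_ℓ = ⟨g, y⟩ ≤ J^D(g) J(y) ≤ J(x) = ⟨g, x⟩`,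
i.e. `g_ℓ x_ℓ ≥ 0`, which is the sign statement since `x_ℓ ≠ 0`.
-/

namespace Real

theorem sign_mul (a b : ℝ) : sign (a * b) = sign a * sign b := by
  rcases lt_trichotomy a 0 with ha | rfl | ha <;> rcases lt_trichotomy b 0 with hb | rfl | hb <;>
    simp [*, sign_of_neg, sign_of_pos, mul_pos_of_neg_of_neg, mul_neg_of_neg_of_pos,
      mul_neg_of_pos_of_neg]

theorem sign_nonneg_of_nonneg {r : ℝ} (hr : 0 ≤ r) : 0 ≤ sign r := by
  rcases hr.eq_or_lt with rfl | hr
  · simp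
  · simp [sign_of_pos hr]

end Real

theorem Tuple.sort_strictMono_comp {n : ℕ} {α β : Type*} [LinearOrder α] [LinearOrder β]
    {φ : α → β} (hφ : StrictMono φ) (f : Fin n → α) : sort (φ ∘ f) = sort f := by
  refine (eq_sort_iff.mpr ⟨hφ.monotone.comp (monotone_sort f), fun i j hij hφij => ?_⟩).symm
  exact (eq_sort_iff.mp rfl).2 i j hij (hφ.injective hφij)

section Slope

variable {n : ℕ}

theorem le_kth_zero (v : Fin n → ℝ) (i : Fin n) : v i ≤ kth v 0 := by
  have hn : 0 < n := i.pos
  rw [kth, dif_pos hn]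
  obtain ⟨j, rfl⟩ := (Tuple.sort fun i => -v i).surjective i
  have := Tuple.monotone_sort (fun i => -v i) (show (⟨0, hn⟩ : Fin n) ≤ j from Nat.zero_le _)
  simp only [Function.comp_apply] at this
  linarith

theorem kth_const_mul (v : Fin n → ℝ) {c : ℝ} (hc : 0 < c) (k : ℕ) :
    kth (fun i => c * v i) k = c * kth v k := by
  unfold kth
  split_ifs
  · have hneg : (fun i => -(c * v i)) = (c * ·) ∘ fun i => -v i := by
      ext i; simp
    rw [hneg, Tuple.sort_strictMono_comp (strictMono_mul_left_of_pos hc)]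
  · ring

theorem absKth_nonneg (v : Fin n → ℝ) (k : ℕ) : 0 ≤ absKth v k := by
  unfold absKth kth
  split_ifs <;> positivity

theorem abs_le_absKth_zero (v : Fin n → ℝ) (i : Fin n) : |v i| ≤ absKth v 0 :=
  le_kth_zero (fun i => |v i|) i

theorem slopeNorm_congr_abs (w : ℕ → ℝ) {x y : Fin n → ℝ} (h : ∀ i, |x i| = |y i|) :
    slopeNorm w x = slopeNorm w y := by
  simp only [slopeNorm, absKth, h]

theorem slopeNorm_smul (w : ℕ → ℝ) (x : Fin n → ℝ) {c : ℝ} (hc : 0 < c) :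
    slopeNorm w (c • x) = c * slopeNorm w x := by
  have habs : ∀ k, absKth (c • x) k = c * absKth x k := fun k => by
    simp only [absKth, Pi.smul_apply, smul_eq_mul, abs_mul, abs_of_pos hc]
    exact kth_const_mul _ hc k
  simp only [slopeNorm, habs, mul_sum, mul_left_comm]

theorem mul_abs_le_slopeNorm {w : ℕ → ℝ} (hw : ∀ k < n, 0 ≤ w k) (x : Fin n → ℝ) (i : Fin n) :
    w 0 * |x i| ≤ slopeNorm w x :=
  calc w 0 * |x i| ≤ w 0 * absKth x 0 :=
        mul_le_mul_of_nonneg_left (abs_le_absKth_zero x i) (hw 0 i.pos)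
    _ ≤ slopeNorm w x :=
        single_le_sum (fun k hk => mul_nonneg (hw k (mem_range.mp hk)) (absKth_nonneg x k))
          (mem_range.mpr i.pos)

theorem bddAbove_slopeNorm_dual {w : ℕ → ℝ} (hw0 : 0 < w 0) (hw : ∀ k < n, 0 ≤ w k)
    (g : Fin n → ℝ) :
    BddAbove {t : ℝ | ∃ x : Fin n → ℝ, slopeNorm w x ≤ 1 ∧ t = ∑ i, g i * x i} := by
  refine ⟨(∑ i, |g i|) / w 0, ?_⟩
  rintro t ⟨x, hx, rfl⟩
  have hxi : ∀ i, |x i| ≤ 1 / w 0 := fun i => by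
    rw [le_div_iff₀ hw0, mul_comm]
    exact (mul_abs_le_slopeNorm hw x i).trans hx
  calc ∑ i, g i * x i ≤ ∑ i, |g i| * (1 / w 0) := sum_le_sum fun i _ =>
        (le_abs_self _).trans (by rw [abs_mul]; gcongr; exact hxi i)
    _ = (∑ i, |g i|) / w 0 := by rw [← sum_mul, mul_one_div]

end Slope

theorem inner_le_dualNorm_mul {n : ℕ} {J : (Fin n → ℝ) → ℝ}
    (hJ : ∀ c : ℝ, 0 < c → ∀ x, J (c • x) = c * J x) {g : Fin n → ℝ}
    (hbdd : BddAbove {t : ℝ | ∃ x : Fin n → ℝ, J x ≤ 1 ∧ t = ∑ i, g i * x i})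
    {x : Fin n → ℝ} (hx : 0 < J x) : ∑ i, g i * x i ≤ dualNorm J g * J x := by
  have hunit : J ((J x)⁻¹ • x) = 1 := by rw [hJ _ (inv_pos.mpr hx), inv_mul_cancel₀ hx.ne']
  have hle : (J x)⁻¹ * ∑ i, g i * x i ≤ dualNorm J g :=
    le_csSup hbdd ⟨_, hunit.le, by simp only [Pi.smul_apply, smul_eq_mul, mul_sum]; ring_nf⟩
  rwa [inv_mul_le_iff₀ hx, mul_comm] at hle

theorem sum_mul_update_neg {n : ℕ} (g x : Fin n → ℝ) (ℓ : Fin n) :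
    ∑ i, g i * Function.update x ℓ (-x ℓ) i = ∑ i, g i * x i - 2 * (g ℓ * x ℓ) := by
  have hterm : ∀ i, g i * Function.update x ℓ (-x ℓ) i
      = g i * x i - if i = ℓ then 2 * (g ℓ * x ℓ) else 0 := fun i => by
    by_cases h : i = ℓ
    · subst h; rw [Function.update_self, if_pos rfl]; ring
    · simp [h]
  simp [hterm, sum_sub_distrib]

theorem mul_nonneg_of_mem_subdifferential {n : ℕ} {J : (Fin n → ℝ) → ℝ}
    (hJ : ∀ c : ℝ, 0 < c → ∀ x, J (c • x) = c * J x)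
    (hJabs : ∀ x y : Fin n → ℝ, (∀ i, |x i| = |y i|) → J x = J y) {x g : Fin n → ℝ}
    (hbdd : BddAbove {t : ℝ | ∃ x : Fin n → ℝ, J x ≤ 1 ∧ t = ∑ i, g i * x i})
    (hx : 0 < J x) (hgx : ∑ i, g i * x i = J x) (hg : dualNorm J g ≤ 1) (ℓ : Fin n) :
    0 ≤ g ℓ * x ℓ := by
  set y := Function.update x ℓ (-x ℓ)
  have hJy : J y = J x := hJabs y x fun i => by
    by_cases h : i = ℓ
    · subst h; simp [y]
    · simp [y, h]
  have hgy := inner_le_dualNorm_mul hJ hbdd (hJy ▸ hx)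
  rw [sum_mul_update_neg, hJy, hgx] at hgy
  linarith [mul_le_mul_of_nonneg_right hg hx.le]

theorem sign_subdiff_general {n : ℕ} (w : ℕ → ℝ)
    (hw0 : 0 < w 0) (hwa : ∀ i j : ℕ, i ≤ j → j < n → w j ≤ w i)
    (hwn : 0 ≤ w (n - 1))
    (x g : Fin n → ℝ)
    (hg : ∑ i, g i * x i = slopeNorm w x ∧ dualNorm (slopeNorm w) g ≤ 1)
    (ℓ : Fin n) (hx : x ℓ ≠ 0) :
    0 ≤ Real.sign (g ℓ) * Real.sign (x ℓ) ∧
      (Real.sign (g ℓ) * Real.sign (x ℓ) = 0 ↔ g ℓ = 0) := by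
  have hw : ∀ k < n, 0 ≤ w k := fun k hk => hwn.trans (hwa k (n - 1) (by omega) (by omega))
  have hJx : 0 < slopeNorm w x :=
    (mul_pos hw0 (abs_pos.mpr hx)).trans_le (mul_abs_le_slopeNorm hw x ℓ)
  have hgx : 0 ≤ g ℓ * x ℓ :=
    mul_nonneg_of_mem_subdifferential (fun c hc x => slopeNorm_smul w x hc)
      (fun _ _ => slopeNorm_congr_abs w) (bddAbove_slopeNorm_dual hw0 hw g) hJx hg.1 hg.2 ℓ
  rw [← Real.sign_mul, Real.sign_eq_zero_iff, mul_eq_zero, or_iff_left hx]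
  exact ⟨Real.sign_nonneg_of_nonneg hgx, Iff.rfl⟩

theorem sign_subdiff {n : ℕ} (hn : 0 < n) (w : ℕ → ℝ)
    (hw0 : 0 < w 0) (hwa : ∀ i j : ℕ, i ≤ j → j < n → w j ≤ w i)
    (hwn : 0 ≤ w (n - 1))
    (x g : Fin n → ℝ)
    (hg : ∑ i, g i * x i = slopeNorm w x ∧ dualNorm (slopeNorm w) g ≤ 1)
    (ℓ : Fin n) (hx : x ℓ ≠ 0) :
    0 ≤ Real.sign (g ℓ) * Real.sign (x ℓ) ∧
      (Real.sign (g ℓ) * Real.sign (x ℓ) = 0 ↔ g ℓ = 0) :=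
  sign_subdiff_general w hw0 hwa hwn x g hg ℓ hx
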